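/- Let p ∈ (0,1) and let Λ be a Lévy measure on ℝ whose Blumenthal–Getoor index satisfies β(Λ) < 1/p. Let η be a Yule–Simon random variable with parameter 1/p, i.e. P(η = k) = p^{-1} B(k, 1/p + 1) for k ≥ 1, and write ⟦y⟧ := y·1_{|y|≤1} for y ∈ ℝ. Then ∫_ℝ E[ | ⟦η·x⟧ − η·⟦x⟧ | ] Λ(dx) < ∞; equivalently, ∑_{k=1}^∞ p^{-1} B(k, 1/p + 1) ∫_ℝ | kx·1_{|kx|≤1} − kx·1_{|x|≤1} | Λ(dx) < ∞. -/

import Mathlib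

open MeasureTheory

/-- The Yule–Simon mass function with parameter `1/p`:
`f_p(k) = p⁻¹ B(k, 1/p + 1)` where `B(x,y) = Γ(x)Γ(y)/Γ(x+y)`. -/
noncomputable def yuleSimonPMF (p : ℝ) (k : ℕ) : ℝ :=
  p⁻¹ * (Real.Gamma k * Real.Gamma (1 / p + 1) / Real.Gamma ((k : ℝ) + 1 / p + 1))

/-- The Blumenthal–Getoor index of a measure `Λ` on `ℝ`:
`β(Λ) = inf { r > 0 : ∫_{[-1,1]} |x|^r Λ(dx) < ∞ }` (real powers). -/
noncomputable def bgIndex (Λ : Measure ℝ) : ℝ :=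
  sInf {r : ℝ | 0 < r ∧ ∫⁻ x in Set.Icc (-1 : ℝ) 1, ENNReal.ofReal (|x| ^ r) ∂Λ < ⊤}


/-!
By log-convexity of `Γ`, `Γ(k)/Γ(k+a) = O(k^{-a})`, so the Yule–Simon weights decay like
`k^{-1/p-1}`. The integrand `|⟦kx⟧ - k⟦x⟧|` vanishes unless `1/k < |x| ≤ 1`, where it equals
`k|x| ≤ k^r |x|^r` for every `r ≥ 1`. Since `β(Λ) < 1/p` (and `r = 2` is admissible, so the
infimum is over a nonempty set), some `r ∈ [1, 1/p)` has `∫_{[-1,1]} |x|^r dΛ < ∞`, and the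
series is dominated by that integral times `∑ k^{r-1/p-1} < ∞`.
-/

namespace Real

/-- The slope of `log ∘ Γ` on `[n, n + x]` is at least its slope `log (n - 1)` on `[n - 1, n]`. -/
theorem rpow_mul_Gamma_le_Gamma_add {n : ℕ} (hn : 2 ≤ n) {x : ℝ} (hx : 0 < x) :
    ((n : ℝ) - 1) ^ x * Gamma n ≤ Gamma (n + x) := by
  have hn1 : (1 : ℝ) < n := by exact_mod_cast hn
  have hn0 : (0 : ℝ) < n := by linarith
  have log_Gamma_add_one {y : ℝ} (hy : 0 < y) :
      (log ∘ Gamma) (y + 1) = (log ∘ Gamma) y + log y := by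
    rw [Function.comp_apply, Gamma_add_one hy.ne', log_mul hy.ne' (Gamma_pos_of_pos hy).ne']
    exact add_comm _ _
  have hlog := BohrMollerup.f_add_nat_ge convexOn_log_Gamma log_Gamma_add_one hn hx
  rw [← exp_le_exp, exp_add, Function.comp_apply, Function.comp_apply,
    exp_log (Gamma_pos_of_pos hn0), exp_log (Gamma_pos_of_pos (by positivity)), mul_comm x,
    ← rpow_def_of_pos (by linarith)] at hlog
  linarith

theorem Gamma_div_Gamma_add_le {n : ℕ} (hn : n ≠ 0) {a : ℝ} (ha : 0 < a) :
    Gamma n / Gamma (n + a) ≤ (1 + a) * (n : ℝ) ^ (-a) := by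
  have hn1 : (1 : ℝ) ≤ n := by exact_mod_cast Nat.one_le_iff_ne_zero.2 hn
  have hn0 : (0 : ℝ) < n := by linarith
  have key := rpow_mul_Gamma_le_Gamma_add (n := n + 1) (by omega) ha
  push_cast at key
  rw [add_sub_cancel_right, Gamma_add_one hn0.ne', add_right_comm,
    Gamma_add_one (by positivity)] at key
  have hGa : 0 < Gamma (n + a) := Gamma_pos_of_pos (by positivity)
  rw [div_le_iff₀ hGa, rpow_neg hn0.le]
  have hratio : (n + a) / n ≤ 1 + a := by
    rw [div_le_iff₀ hn0]; nlinarith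
  calc Gamma n = ((n : ℝ) ^ a)⁻¹ * ((n : ℝ) ^ a * (n * Gamma n)) / n := by field_simp
    _ ≤ ((n : ℝ) ^ a)⁻¹ * ((n + a) * Gamma (n + a)) / n := by gcongr
    _ = (n + a) / n * ((n : ℝ) ^ a)⁻¹ * Gamma (n + a) := by ring
    _ ≤ (1 + a) * ((n : ℝ) ^ a)⁻¹ * Gamma (n + a) := by gcongr

end Real

open Real

theorem yuleSimonPMF_le {p : ℝ} (hp : 0 < p) {k : ℕ} (hk : k ≠ 0) :
    yuleSimonPMF p k ≤ p⁻¹ * Gamma (1 / p + 1) * (1 / p + 2) * (k : ℝ) ^ (-(1 / p + 1)) := by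
  have ha : 0 < 1 / p + 1 := by positivity
  have hpmf :
      yuleSimonPMF p k = p⁻¹ * Gamma (1 / p + 1) * (Gamma k / Gamma (k + (1 / p + 1))) := by
    rw [yuleSimonPMF, add_assoc]; ring
  calc yuleSimonPMF p k
      ≤ p⁻¹ * Gamma (1 / p + 1) * ((1 + (1 / p + 1)) * (k : ℝ) ^ (-(1 / p + 1))) := by
        rw [hpmf]
        have hΓ := (Gamma_pos_of_pos ha).le
        gcongr
        exact Gamma_div_Gamma_add_le hk ha
    _ = _ := by ring

/-- The truncation `⟦y⟧ = y·1_{|y|≤1}` of the paper. -/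
noncomputable def unitTrunc (y : ℝ) : ℝ := if |y| ≤ 1 then y else 0

theorem abs_unitTrunc_mul_sub_le {k r : ℝ} (hk : 1 ≤ k) (hr : 1 ≤ r) (x : ℝ) :
    |unitTrunc (k * x) - k * unitTrunc x| ≤
      (Set.Icc (-1) 1).indicator (fun x => k ^ r * |x| ^ r) x := by
  have hk0 : 0 < k := by linarith
  by_cases hx : |x| ≤ 1
  · have hxI : x ∈ Set.Icc (-1 : ℝ) 1 := abs_le.1 hx
    rw [Set.indicator_of_mem hxI, unitTrunc, unitTrunc, if_pos hx]
    split_ifs with hkx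
    · simp only [sub_self, abs_zero]; positivity
    · calc |0 - k * x| = |k * x| ^ (1 : ℝ) := by rw [zero_sub, abs_neg, rpow_one]
        _ ≤ |k * x| ^ r := rpow_le_rpow_of_exponent_le (le_of_not_ge hkx) hr
        _ = k ^ r * |x| ^ r := by rw [abs_mul, abs_of_pos hk0, mul_rpow hk0.le (abs_nonneg x)]
  · have hxI : x ∉ Set.Icc (-1 : ℝ) 1 := fun h => hx (abs_le.2 h)
    have hkx : ¬ |k * x| ≤ 1 := by
      rw [abs_mul, abs_of_pos hk0]; nlinarith
    rw [Set.indicator_of_notMem hxI, unitTrunc, unitTrunc, if_neg hx, if_neg hkx, mul_zero,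
      sub_zero, abs_zero]

theorem lintegral_abs_unitTrunc_mul_sub_le (Λ : Measure ℝ) {k r : ℝ} (hk : 1 ≤ k) (hr : 1 ≤ r) :
    ∫⁻ x, ENNReal.ofReal |unitTrunc (k * x) - k * unitTrunc x| ∂Λ ≤
      ENNReal.ofReal (k ^ r) * ∫⁻ x in Set.Icc (-1) 1, ENNReal.ofReal (|x| ^ r) ∂Λ := by
  calc ∫⁻ x, ENNReal.ofReal |unitTrunc (k * x) - k * unitTrunc x| ∂Λ
      ≤ ∫⁻ x, (Set.Icc (-1) 1).indicator (fun x => ENNReal.ofReal (k ^ r * |x| ^ r)) x ∂Λ := by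
        refine lintegral_mono fun x => ?_
        have hind := congr_fun (Set.indicator_comp_of_zero (s := Set.Icc (-1 : ℝ) 1)
          (f := fun x => k ^ r * |x| ^ r) ENNReal.ofReal_zero) x
        rw [Function.comp_def] at hind
        rw [hind, Function.comp_apply]
        exact ENNReal.ofReal_le_ofReal (abs_unitTrunc_mul_sub_le hk hr x)
    _ = ∫⁻ x in Set.Icc (-1) 1, ENNReal.ofReal (k ^ r) * ENNReal.ofReal (|x| ^ r) ∂Λ := by
        rw [lintegral_indicator measurableSet_Icc]
        simp only [ENNReal.ofReal_mul (rpow_nonneg (by linarith : (0:ℝ) ≤ k) r)]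
    _ = _ := lintegral_const_mul _ (by fun_prop)

theorem setLIntegral_Icc_abs_rpow_le_of_le (Λ : Measure ℝ) {s r : ℝ} (hs : 0 ≤ s) (hsr : s ≤ r) :
    ∫⁻ x in Set.Icc (-1) 1, ENNReal.ofReal (|x| ^ r) ∂Λ ≤
      ∫⁻ x in Set.Icc (-1) 1, ENNReal.ofReal (|x| ^ s) ∂Λ :=
  setLIntegral_mono' measurableSet_Icc fun x hx =>
    ENNReal.ofReal_le_ofReal (rpow_le_rpow_of_exponent_ge' (abs_nonneg x) (abs_le.2 hx) hs hsr)

theorem setLIntegral_Icc_abs_rpow_two_le (Λ : Measure ℝ) :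
    ∫⁻ x in Set.Icc (-1) 1, ENNReal.ofReal (|x| ^ (2 : ℝ)) ∂Λ ≤
      ∫⁻ x, ENNReal.ofReal (min (x ^ 2) 1) ∂Λ := by
  calc ∫⁻ x in Set.Icc (-1) 1, ENNReal.ofReal (|x| ^ (2 : ℝ)) ∂Λ
      = ∫⁻ x in Set.Icc (-1) 1, ENNReal.ofReal (min (x ^ 2) 1) ∂Λ := by
        refine setLIntegral_congr_fun measurableSet_Icc fun x hx => ?_
        have hx2 : x ^ 2 ≤ 1 := by rw [← sq_abs]; exact pow_le_one₀ (abs_nonneg x) (abs_le.2 hx)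
        rw [rpow_two, sq_abs, min_eq_left hx2]
    _ ≤ _ := setLIntegral_le_lintegral _ _

theorem exists_setLIntegral_Icc_abs_rpow_lt_top_of_bgIndex_lt {Λ : Measure ℝ}
    (hΛ : ∫⁻ x, ENNReal.ofReal (min (x ^ 2) 1) ∂Λ < ⊤) {b : ℝ} (hb : 1 < b) (hβ : bgIndex Λ < b) :
    ∃ r, 1 ≤ r ∧ r < b ∧ ∫⁻ x in Set.Icc (-1) 1, ENNReal.ofReal (|x| ^ r) ∂Λ < ⊤ := by
  have two_mem : (2 : ℝ) ∈ {r : ℝ | 0 < r ∧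
      ∫⁻ x in Set.Icc (-1 : ℝ) 1, ENNReal.ofReal (|x| ^ r) ∂Λ < ⊤} :=
    ⟨two_pos, (setLIntegral_Icc_abs_rpow_two_le Λ).trans_lt hΛ⟩
  obtain ⟨s, ⟨hs0, hs⟩, hsb⟩ := exists_lt_of_csInf_lt ⟨2, two_mem⟩ hβ
  exact ⟨max s 1, le_max_right s 1, max_lt hsb hb,
    (setLIntegral_Icc_abs_rpow_le_of_le Λ hs0.le (le_max_left s 1)).trans_lt hs⟩

theorem nrlp_drift_correction_integrable_general
    (p : ℝ) (hp0 : 0 < p) (hp1 : p < 1)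
    (Λ : Measure ℝ)
    (hΛint : ∫⁻ x : ℝ, ENNReal.ofReal (min (x ^ 2) 1) ∂Λ < ⊤)
    (hBG : bgIndex Λ < 1 / p) :
    ∑' n : ℕ, ENNReal.ofReal (yuleSimonPMF p (n + 1)) *
      ∫⁻ x : ℝ, ENNReal.ofReal
        |(if |((n : ℝ) + 1) * x| ≤ 1 then ((n : ℝ) + 1) * x else 0) -
          ((n : ℝ) + 1) * (if |x| ≤ 1 then x else 0)| ∂Λ < ⊤ := by
  obtain ⟨r, hr1, hrp, hΛr⟩ :=
    exists_setLIntegral_Icc_abs_rpow_lt_top_of_bgIndex_lt hΛint (one_lt_one_div hp0 hp1) hBG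
  set C := p⁻¹ * Gamma (1 / p + 1) * (1 / p + 2)
  set I := ∫⁻ x in Set.Icc (-1) 1, ENNReal.ofReal (|x| ^ r) ∂Λ
  have hterm (n : ℕ) : ENNReal.ofReal (yuleSimonPMF p (n + 1)) *
      ∫⁻ x, ENNReal.ofReal |unitTrunc ((n + 1) * x) - (n + 1) * unitTrunc x| ∂Λ ≤
      ENNReal.ofReal (C * ((n : ℝ) + 1) ^ (r - (1 / p + 1))) * I := by
    have hk : (1 : ℝ) ≤ n + 1 := by linarith [n.cast_nonneg (α := ℝ)]
    have hpmf := yuleSimonPMF_le hp0 n.succ_ne_zero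
    push_cast at hpmf
    calc _ ≤ ENNReal.ofReal (C * ((n : ℝ) + 1) ^ (-(1 / p + 1))) *
          (ENNReal.ofReal (((n : ℝ) + 1) ^ r) * I) :=
          mul_le_mul' (ENNReal.ofReal_le_ofReal hpmf) (lintegral_abs_unitTrunc_mul_sub_le Λ hk hr1)
      _ = _ := by
        rw [← mul_assoc, ← ENNReal.ofReal_mul (by positivity), mul_assoc,
          ← rpow_add (by linarith), neg_add_eq_sub]
  have hsum : Summable fun n : ℕ => C * ((n : ℝ) + 1) ^ (r - (1 / p + 1)) := by
    refine Summable.mul_left C ?_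
    exact_mod_cast (summable_nat_add_iff 1).2 (summable_nat_rpow.2 (by linarith))
  calc _ ≤ ∑' n : ℕ, ENNReal.ofReal (C * ((n : ℝ) + 1) ^ (r - (1 / p + 1))) * I :=
        ENNReal.tsum_le_tsum hterm
    _ = ENNReal.ofReal (∑' n : ℕ, C * ((n : ℝ) + 1) ^ (r - (1 / p + 1))) * I := by
        rw [ENNReal.tsum_mul_right, ENNReal.ofReal_tsum_of_nonneg (fun n => by positivity) hsum]
    _ < ⊤ := ENNReal.mul_lt_top ENNReal.ofReal_lt_top hΛr

/-- For an admissible memory parameter (`β(Λ) < 1/p`), writing `⟦y⟧ = y·1_{|y|≤1}` and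
`η` a Yule–Simon variable with parameter `1/p`,
`∑_{k≥1} f_p(k) ∫ |⟦kx⟧ − k⟦x⟧| Λ(dx) < ∞`. -/
theorem nrlp_drift_correction_integrable
    (p : ℝ) (hp0 : 0 < p) (hp1 : p < 1)
    (Λ : Measure ℝ) (hΛ0 : Λ {0} = 0)
    (hΛint : ∫⁻ x : ℝ, ENNReal.ofReal (min (x ^ 2) 1) ∂Λ < ⊤)
    (hBG : bgIndex Λ < 1 / p) :
    ∑' n : ℕ, ENNReal.ofReal (yuleSimonPMF p (n + 1)) *
      ∫⁻ x : ℝ, ENNReal.ofReal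
        |(if |((n : ℝ) + 1) * x| ≤ 1 then ((n : ℝ) + 1) * x else 0) -
          ((n : ℝ) + 1) * (if |x| ≤ 1 then x else 0)| ∂Λ < ⊤ :=
  nrlp_drift_correction_integrable_general p hp0 hp1 Λ hΛint hBG
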